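/- Let d ≥ 1, M ⊆ ℤ^d and C > 0 be such that R_M(n) ≤ C·n^{d−1} for all n ≥ 1. Then there exists K₀ such that for all K ≥ K₀ there exists L ≥ 0 such that for every x ∈ ℤ^d with ‖x‖ ≥ L there exists a nonzero vector v ∈ ℤ^d with ‖v‖ ≤ (2C)^{1/d}·(5K)^{(d−1)/d} such that M is v-periodic inside B(x,K). -/

import Mathlib

open Classical

noncomputable section

/-- Sup norm of an integer vector. -/
def supNorm {ι : Type} [Fintype ι] (x : ι → ℤ) : ℕ :=
  Finset.univ.sup fun i => (x i).natAbs

/-- The block of size `n` of `M` at `x`. -/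
def blockOf {ι : Type} [Fintype ι] (M : Set (ι → ℤ)) (x : ι → ℤ) (n : ℕ) :
    (ι → Fin n) → Prop :=
  fun w => (fun i => x i + (w i : ℤ)) ∈ M

/-- A block is recurrent if it occurs at points of arbitrarily large norm. -/
def IsRecurrentBlock {ι : Type} [Fintype ι] (M : Set (ι → ℤ)) (n : ℕ)
    (B : (ι → Fin n) → Prop) : Prop :=
  ∀ L : ℕ, ∃ x : ι → ℤ, L ≤ supNorm x ∧ blockOf M x n = B

/-- `R_M(n)`: number of distinct recurrent blocks of size `n`. -/
def recBlockCount {ι : Type} [Fintype ι] (M : Set (ι → ℤ)) (n : ℕ) : ℕ :=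
  Set.ncard {B : (ι → Fin n) → Prop | IsRecurrentBlock M n B}

/-- `p_M(n)`: number of distinct blocks of size `n`. -/
def blockCount {ι : Type} [Fintype ι] (M : Set (ι → ℤ)) (n : ℕ) : ℕ :=
  Set.ncard {B : (ι → Fin n) → Prop | ∃ x, blockOf M x n = B}

/-- Linear subset of `ℤ^ι`. -/
def IsLinearSetZ {ι : Type} [Fintype ι] (S : Set (ι → ℤ)) : Prop :=
  ∃ (x : ι → ℤ) (V : Finset (ι → ℤ)),
    S = {y | ∃ c : (ι → ℤ) → ℕ, y = x + ∑ v ∈ V, (c v : ℤ) • v}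

/-- Semilinear = finite union of linear sets. -/
def IsSemilinearSetZ {ι : Type} [Fintype ι] (S : Set (ι → ℤ)) : Prop :=
  ∃ F : Finset (Set (ι → ℤ)), (∀ T ∈ F, IsLinearSetZ T) ∧ S = ⋃ T ∈ F, T

/-- Section `M_{i,c}` of a subset of `ℤ^(d+1)`. -/
def sectionSet {d : ℕ} (M : Set (Fin (d + 1) → ℤ)) (i : Fin (d + 1)) (c : ℤ) :
    Set (Fin d → ℤ) :=
  {y | i.insertNth c y ∈ M}

/-- Open ball (for the sup norm) of radius `K` centered at `x`. -/
def ball {ι : Type} [Fintype ι] (x : ι → ℤ) (K : ℕ) : Set (ι → ℤ) :=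
  {y | supNorm (x - y) < K}

/-- `M` is `v`-periodic inside `X`. -/
def vPeriodicInside {ι : Type} [Fintype ι] (M : Set (ι → ℤ)) (v : ι → ℤ)
    (X : Set (ι → ℤ)) : Prop :=
  ∀ m : ι → ℤ, m ∈ X → m + v ∈ X → (m ∈ M ↔ m + v ∈ M)

/-- Border of `A` in direction `v`. -/
def border {ι : Type} (A : Set (ι → ℤ)) (v : ι → ℤ) : Set (ι → ℤ) :=
  {x | x ∈ A ∧ x + v ∉ A}

/-- `(d-k)`-dimensional section of `M ⊆ ℤ^d` obtained by fixing the coordinates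
in the range of `g` to the corresponding constants `c`. -/
def multiSection {d k : ℕ} (M : Set (Fin d → ℤ)) (g : Fin k → Fin d)
    (c : Fin k → ℤ) : Set ({j : Fin d // ∀ m, g m ≠ j} → ℤ) :=
  {y | (fun j : Fin d =>
    if h : ∃ m, g m = j then c (Classical.choose h)
    else y ⟨j, fun m hm => h ⟨m, hm⟩⟩) ∈ M}

/-- Repetitivity of a subset of `ℤ^ι`. -/
def Repetitive {ι : Type} [Fintype ι] (M : Set (ι → ℤ)) : Prop :=
  ∀ n : ℕ, 1 ≤ n → ∃ R : ℕ, ∀ x y : ι → ℤ, ∃ z : ι → ℤ,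
    supNorm (z - y) ≤ R ∧ blockOf M z n = blockOf M x n

/-- Ideal crystal: `d` linearly independent translation periods. -/
def IsIdealCrystal {d : ℕ} (M : Set (Fin d → ℤ)) : Prop :=
  ∃ p : Fin d → (Fin d → ℤ), LinearIndependent ℤ p ∧
    ∀ i, (fun x => x + p i) '' M = M

/-!
There are finitely many blocks of size `n`, and each non-recurrent one is absent beyond some
norm, so a block that occurs far enough out is recurrent. Hence, when `‖x‖` is large, the
`r ^ d` blocks of size `n = 2K + r - 1` whose corners lie in a cube of side `r` just below the
corner of `B(x, K)` are all recurrent, and if `R_M(n) < r ^ d` two of them, at corners `a ≠ b`,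
coincide. Then `M` is `(b - a)`-periodic inside the cube of side `n` at `a`, which contains
`B(x, K)`, and `‖b - a‖ < r`. Taking `r = ⌈t⌉` with `t = (2C)^{1/d} (5K)^{(d-1)/d}`, the growth
bound gives `R_M(n) ≤ C n^{d-1} < 2C (5K)^{d-1} = t^d ≤ r^d` as long as `n ≤ 5K`, which holds
for large `K` since `t^d = O(K^{d-1})` forces `t ≤ K`.
-/

section Blocks

variable {ι : Type} [Fintype ι]

def cube (y : ι → ℤ) (r : ℕ) : Finset (ι → ℤ) :=
  Fintype.piFinset fun i => Finset.Ico (y i) (y i + r)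

theorem mem_cube {y a : ι → ℤ} {r : ℕ} : a ∈ cube y r ↔ ∀ i, y i ≤ a i ∧ a i < y i + r := by
  simp [cube]

theorem card_cube (y : ι → ℤ) (r : ℕ) : (cube y r).card = r ^ Fintype.card ι := by
  simp [cube, Fintype.card_piFinset]

theorem natAbs_le_supNorm (x : ι → ℤ) (i : ι) : (x i).natAbs ≤ supNorm x :=
  Finset.le_sup (f := fun i => (x i).natAbs) (Finset.mem_univ i)

theorem supNorm_le_iff {x : ι → ℤ} {k : ℕ} : supNorm x ≤ k ↔ ∀ i, (x i).natAbs ≤ k := by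
  simp [supNorm]

theorem supNorm_le_add_of_natAbs_sub_le {x y : ι → ℤ} {k : ℕ}
    (h : ∀ i, (x i - y i).natAbs ≤ k) : supNorm x ≤ supNorm y + k :=
  supNorm_le_iff.2 fun i => by have := natAbs_le_supNorm y i; have := h i; omega

theorem supNorm_sub_le_of_mem_cube {y a b : ι → ℤ} {r : ℕ} (ha : a ∈ cube y r)
    (hb : b ∈ cube y r) : supNorm (b - a) ≤ r - 1 :=
  supNorm_le_iff.2 fun i => by
    have := mem_cube.1 ha i
    have := mem_cube.1 hb i
    simp only [Pi.sub_apply]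
    omega

theorem natAbs_sub_lt_of_mem_ball {x y : ι → ℤ} {K : ℕ} (h : y ∈ ball x K) (i : ι) :
    (x i - y i).natAbs < K :=
  (natAbs_le_supNorm (x - y) i).trans_lt h

theorem ball_subset_cube {x a : ι → ℤ} {K r : ℕ} (ha : a ∈ cube (fun i => x i + 1 - K - r) r) :
    ball x K ⊆ ↑(cube a (2 * K + r - 1)) := fun m hm =>
  mem_cube.2 fun i => by
    have := natAbs_sub_lt_of_mem_ball hm i
    have := mem_cube.1 ha i
    omega

theorem exists_isRecurrentBlock_blockOf (M : Set (ι → ℤ)) (n : ℕ) :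
    ∃ L : ℕ, ∀ z, L ≤ supNorm z → IsRecurrentBlock M n (blockOf M z n) := by
  have : ∀ B, ∃ L : ℕ, ∀ z, L ≤ supNorm z → blockOf M z n = B → IsRecurrentBlock M n B := by
    intro B
    by_cases hB : IsRecurrentBlock M n B
    · exact ⟨0, fun _ _ _ => hB⟩
    · obtain ⟨L, hL⟩ := not_forall.1 hB
      exact ⟨L, fun z hz hzB => (hL ⟨z, hz, hzB⟩).elim⟩
  choose L hL using this
  exact ⟨Finset.univ.sup L, fun z hz =>
    hL _ z ((Finset.le_sup (Finset.mem_univ _)).trans hz) rfl⟩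

theorem exists_ne_blockOf_eq_of_recBlockCount_lt {M : Set (ι → ℤ)} {n r : ℕ}
    (h : recBlockCount M n < r ^ Fintype.card ι) :
    ∃ L : ℕ, ∀ y, L ≤ supNorm y →
      ∃ a ∈ cube y r, ∃ b ∈ cube y r, a ≠ b ∧ blockOf M a n = blockOf M b n := by
  obtain ⟨L, hL⟩ := exists_isRecurrentBlock_blockOf M n
  refine ⟨L + r, fun y hy => Finset.exists_ne_map_eq_of_card_lt_of_maps_to
    (t := (Set.toFinite {B | IsRecurrentBlock M n B}).toFinset) ?_ fun a ha => ?_⟩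
  · rwa [card_cube, ← Set.ncard_eq_toFinset_card]
  · rw [Finset.mem_coe] at ha
    rw [Finset.mem_coe, Set.Finite.mem_toFinset]
    apply hL
    have : supNorm y ≤ supNorm a + r :=
      supNorm_le_add_of_natAbs_sub_le fun i => by have := mem_cube.1 ha i; omega
    omega

theorem vPeriodicInside_sub_of_blockOf_eq {M X : Set (ι → ℤ)} {a b : ι → ℤ} {n : ℕ}
    (hab : blockOf M a n = blockOf M b n) (hX : X ⊆ ↑(cube a n)) :
    vPeriodicInside M (b - a) X := by
  intro m hm _
  have hm := mem_cube.1 (hX hm)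
  let w : ι → Fin n := fun i => ⟨(m i - a i).toNat, by have := hm i; omega⟩
  have hma : (fun i => a i + ((w i : ℕ) : ℤ)) = m :=
    funext fun i => by have := hm i; simp only [w]; omega
  have hmb : (fun i => b i + ((w i : ℕ) : ℤ)) = m + (b - a) :=
    funext fun i => by have := hm i; simp only [w, Pi.add_apply, Pi.sub_apply]; omega
  have := congrFun hab w
  simp only [blockOf, hma, hmb] at this
  exact this.to_iff

theorem exists_vPeriodicInside_ball_of_recBlockCount_lt {M : Set (ι → ℤ)} {K r : ℕ}
    (h : recBlockCount M (2 * K + r - 1) < r ^ Fintype.card ι) :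
    ∃ L : ℕ, ∀ x, L ≤ supNorm x →
      ∃ v, v ≠ 0 ∧ supNorm v ≤ r - 1 ∧ vPeriodicInside M v (ball x K) := by
  obtain ⟨L, hL⟩ := exists_ne_blockOf_eq_of_recBlockCount_lt h
  refine ⟨L + K + r + 1, fun x hx => ?_⟩
  have hy : L ≤ supNorm fun i => x i + 1 - K - r := by
    have : supNorm x ≤ supNorm (fun i => x i + 1 - K - r) + (K + r + 1) :=
      supNorm_le_add_of_natAbs_sub_le fun i => by omega
    omega
  obtain ⟨a, ha, b, hb, hab, hblock⟩ := hL _ hy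
  exact ⟨b - a, sub_ne_zero.2 hab.symm, supNorm_sub_le_of_mem_cube ha hb,
    vPeriodicInside_sub_of_blockOf_eq hblock (ball_subset_cube ha)⟩

theorem recBlockCount_lt_pow_of_growth {d : ℕ} {M : Set (ι → ℤ)} {C : ℝ} (hC : 0 < C)
    (hR : ∀ n : ℕ, 1 ≤ n → (recBlockCount M n : ℝ) ≤ C * (n : ℝ) ^ (d - 1)) {K r : ℕ}
    (hK : 1 ≤ K) (hrK : r ≤ K) (hr : 2 * C * (5 * K : ℝ) ^ (d - 1) ≤ r ^ d) :
    recBlockCount M (2 * K + r - 1) < r ^ d := by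
  have hn : 1 ≤ 2 * K + r - 1 := by omega
  have hn5 : ((2 * K + r - 1 : ℕ) : ℝ) ≤ 5 * K := by
    exact_mod_cast (by omega : 2 * K + r - 1 ≤ 5 * K)
  exact_mod_cast calc
    (recBlockCount M (2 * K + r - 1) : ℝ) ≤ C * ((2 * K + r - 1 : ℕ) : ℝ) ^ (d - 1) := hR _ hn
    _ < 2 * C * ((2 * K + r - 1 : ℕ) : ℝ) ^ (d - 1) :=
      mul_lt_mul_of_pos_right (by linarith) (by positivity)
    _ ≤ 2 * C * (5 * K) ^ (d - 1) := by gcongr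
    _ ≤ r ^ d := hr

end Blocks

theorem rpow_one_div_mul_rpow_sub_one_div_pow {a b : ℝ} (ha : 0 ≤ a) (hb : 0 ≤ b) {d : ℕ}
    (hd : 1 ≤ d) : (a ^ ((1 : ℝ) / d) * b ^ (((d : ℝ) - 1) / d)) ^ d = a * b ^ (d - 1) := by
  have hd0 : (d : ℝ) ≠ 0 := by exact_mod_cast (by omega : d ≠ 0)
  rw [mul_pow, ← Real.rpow_mul_natCast ha, ← Real.rpow_mul_natCast hb,
    ← Real.rpow_natCast b (d - 1), Nat.cast_sub hd, div_mul_cancel₀ _ hd0,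
    div_mul_cancel₀ _ hd0, Real.rpow_one, Nat.cast_one]

theorem le_of_pow_le_mul_pow_sub_one {t c K : ℝ} {d : ℕ} (ht : 0 ≤ t) (hK : 0 ≤ K) (hd : 1 ≤ d)
    (htd : t ^ d ≤ c * K ^ (d - 1)) (hc : c ≤ K) : t ≤ K := by
  refine (pow_le_pow_iff_left₀ ht hK (by omega : d ≠ 0)).1 ?_
  calc t ^ d ≤ c * K ^ (d - 1) := htd
    _ ≤ K * K ^ (d - 1) := by gcongr
    _ = K ^ d := by rw [← pow_succ', Nat.sub_add_cancel hd]

/-- Corollary: if `R_M(n) ≤ C·n^{d-1}` for all `n ≥ 1`, then for all large enough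
`K` there is `L` such that any point of norm `≥ L` admits a nonzero local period
`v` with `‖v‖ ≤ (2C)^{1/d}·(5K)^{(d-1)/d}` inside the ball of radius `K`. -/
theorem local_period_corollary (d : ℕ) (hd : 1 ≤ d) (M : Set (Fin d → ℤ))
    (C : ℝ) (hC : 0 < C)
    (hR : ∀ n : ℕ, 1 ≤ n → (recBlockCount M n : ℝ) ≤ C * (n : ℝ) ^ (d - 1)) :
    ∃ K₀ : ℕ, ∀ K : ℕ, K₀ ≤ K → ∃ L : ℕ,
      ∀ x : Fin d → ℤ, L ≤ supNorm x →
        ∃ v : Fin d → ℤ, v ≠ 0 ∧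
          (supNorm v : ℝ) ≤
            (2 * C) ^ ((1 : ℝ) / d) * (5 * (K : ℝ)) ^ (((d : ℝ) - 1) / d) ∧
          vPeriodicInside M v (ball x K) := by
  refine ⟨⌈2 * C * 5 ^ (d - 1)⌉₊ + 1, fun K hK => ?_⟩
  have hK0 : (0 : ℝ) < K := by exact_mod_cast (by omega : 0 < K)
  set t := (2 * C) ^ ((1 : ℝ) / d) * (5 * (K : ℝ)) ^ (((d : ℝ) - 1) / d)
  have ht0 : 0 < t := by positivity
  have htd : t ^ d = 2 * C * (5 * K) ^ (d - 1) :=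
    rpow_one_div_mul_rpow_sub_one_div_pow (by positivity) (by positivity) hd
  have htK : t ≤ K := le_of_pow_le_mul_pow_sub_one ht0.le hK0.le hd
    (by rw [htd, mul_pow, ← mul_assoc]) (Nat.lt_of_ceil_lt hK).le
  set r := ⌈t⌉₊
  have hcount : recBlockCount M (2 * K + r - 1) < r ^ Fintype.card (Fin d) := by
    rw [Fintype.card_fin]
    exact recBlockCount_lt_pow_of_growth hC hR (by exact_mod_cast hK0) (Nat.ceil_le.2 htK)
      (htd ▸ pow_le_pow_left₀ ht0.le (Nat.le_ceil t) d)
  obtain ⟨L, hL⟩ := exists_vPeriodicInside_ball_of_recBlockCount_lt hcount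
  refine ⟨L, fun x hx => ?_⟩
  obtain ⟨v, hv, hvr, hper⟩ := hL x hx
  refine ⟨v, hv, ?_, hper⟩
  calc (supNorm v : ℝ) ≤ (r - 1 : ℕ) := by exact_mod_cast hvr
    _ ≤ t := (Nat.lt_ceil.1 (Nat.sub_one_lt (Nat.ceil_pos.2 ht0).ne')).le
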